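/- Let u_c be in (0,1) and let f be a KPP reaction function. Then the unique propagation speed satisfies the upper bound v*(u_c) ≤ v_c(u_c), where v_c(u_c) = ( (1/u_c) · sup_{γ ∈ (u_c, 1]} f(γ) )^{1/2}; equivalently, no permanent form travelling wave solution with cut-off u_c exists with speed v > v_c(u_c). -/

import Mathlib

open Real Filter Topology

/-- A KPP reaction function: `f ∈ C¹`, `f 0 = f 1 = 0`, `f' 0 = 1`, `f' 1 < 0`,
`0 < f u ≤ u` on `(0,1)` and `f u < 0` for `u > 1`. -/
def IsKPP (f : ℝ → ℝ) : Prop :=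
  ContDiff ℝ 1 f ∧ f 0 = 0 ∧ f 1 = 0 ∧ deriv f 0 = 1 ∧ deriv f 1 < 0 ∧
  (∀ u : ℝ, 0 < u → u < 1 → 0 < f u ∧ f u ≤ u) ∧
  (∀ u : ℝ, 1 < u → f u < 0)

/-- The cut-off reaction function: `f_c u = f u` for `u > u_c`, and `0` for `u ≤ u_c`. -/
noncomputable def cutoff (f : ℝ → ℝ) (uc : ℝ) : ℝ → ℝ :=
  fun u => if uc < u then f u else 0

/-- A permanent form travelling wave solution with cut-off `uc` and speed `v`. -/
def IsPTW (f : ℝ → ℝ) (uc v : ℝ) (U : ℝ → ℝ) : Prop :=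
  ContDiff ℝ 1 U ∧
  (∀ y : ℝ, y ≠ 0 → ContDiffAt ℝ 2 U y) ∧
  (∀ y : ℝ, y ≠ 0 → deriv (deriv U) y + v * deriv U y + cutoff f uc (U y) = 0) ∧
  U 0 = uc ∧
  (∀ y : ℝ, y < 0 → uc ≤ U y ∧ U y ≤ 1) ∧
  (∀ y : ℝ, 0 < y → 0 ≤ U y ∧ U y ≤ uc) ∧
  Tendsto U atBot (𝓝 1) ∧
  Tendsto U atTop (𝓝 0)

/-!
Suppose `v > 0` and write `M` for the supremum of `f` on `(u_c, 1]`. With the integrating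
factor `g y = exp (v y) U'(y)` the equation reads `g' = -exp (v y) f_c(U)`.
Ahead of the front `f_c(U) = 0`, so `U' = U'(0) exp (-v y)`, and `U → 0` forces
`U'(0) = -v u_c`. Behind the front `f_c(U) ≤ M`, so integrating from `y < 0` to `0` gives
`g y ≤ M / v - v u_c`. If `v² u_c > M` this bound is a negative constant `-c`, hence
`U' ≤ -c` on `(-∞, 0)` and `U` grows linearly as `y → -∞`, contradicting `U ≤ 1`.
-/

open Set

lemma le_of_hasDerivAt_nonneg {φ φ' : ℝ → ℝ} {a b : ℝ} (hab : a ≤ b)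
    (hφ : ContinuousOn φ (Icc a b)) (hφ' : ∀ x ∈ Ioo a b, HasDerivAt φ (φ' x) x)
    (hnonneg : ∀ x ∈ Ioo a b, 0 ≤ φ' x) : φ a ≤ φ b :=
  monotoneOn_of_hasDerivWithinAt_nonneg (convex_Icc a b) hφ
    (by simpa only [interior_Icc] using fun x hx => (hφ' x hx).hasDerivWithinAt)
    (by simpa only [interior_Icc] using hnonneg) (left_mem_Icc.2 hab) (right_mem_Icc.2 hab) hab

lemma eq_of_hasDerivAt_zero {φ : ℝ → ℝ} {a b : ℝ} (hab : a ≤ b)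
    (hφ : ContinuousOn φ (Icc a b)) (hφ' : ∀ x ∈ Ioo a b, HasDerivAt φ 0 x) : φ b = φ a := by
  have hle := le_of_hasDerivAt_nonneg hab hφ hφ' fun _ _ => le_rfl
  have hge := le_of_hasDerivAt_nonneg (φ := fun x => -φ x) hab hφ.neg
    (fun x hx => (hφ' x hx).neg.congr_deriv neg_zero) fun _ _ => le_rfl
  linarith

lemma IsKPP.le_self {f : ℝ → ℝ} (hf : IsKPP f) {u : ℝ} (hu₀ : 0 < u) (hu₁ : u ≤ 1) :
    f u ≤ u := by
  obtain ⟨-, -, hf1, -, -, hf01, -⟩ := hf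
  rcases hu₁.lt_or_eq with hu₁ | rfl
  · exact (hf01 u hu₀ hu₁).2
  · simp [hf1]

lemma cutoff_le {f : ℝ → ℝ} {uc M u : ℝ} (hM₀ : 0 ≤ M) (hM : ∀ w ∈ Ioc uc 1, f w ≤ M)
    (hu : u ≤ 1) : cutoff f uc u ≤ M := by
  unfold cutoff
  split_ifs with h
  exacts [hM u ⟨h, hu⟩, hM₀]

namespace IsPTW

variable {f : ℝ → ℝ} {uc v : ℝ} {U : ℝ → ℝ}

lemma map_zero (hU : IsPTW f uc v U) : U 0 = uc := hU.2.2.2.1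

lemma le_one_of_neg (hU : IsPTW f uc v U) {y : ℝ} (hy : y < 0) : U y ≤ 1 :=
  (hU.2.2.2.2.1 y hy).2

lemma mem_Icc_of_pos (hU : IsPTW f uc v U) {y : ℝ} (hy : 0 < y) : U y ∈ Icc 0 uc :=
  hU.2.2.2.2.2.1 y hy

lemma tendsto_atTop (hU : IsPTW f uc v U) : Tendsto U atTop (𝓝 0) := hU.2.2.2.2.2.2.2

lemma differentiable (hU : IsPTW f uc v U) : Differentiable ℝ U :=
  hU.1.differentiable one_ne_zero

lemma hasDerivAt_deriv (hU : IsPTW f uc v U) {y : ℝ} (hy : y ≠ 0) :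
    HasDerivAt (deriv U) (-(v * deriv U y) - cutoff f uc (U y)) y := by
  obtain ⟨-, hC2, hODE, -⟩ := hU
  have hdiff : DifferentiableAt ℝ (deriv U) y :=
    ((hC2 y hy).derivWithin (m := 1) le_rfl).differentiableAt one_ne_zero
  exact hdiff.hasDerivAt.congr_deriv (by linarith [hODE y hy])

lemma continuous_exp_mul_deriv (hU : IsPTW f uc v U) :
    Continuous fun s => exp (v * s) * deriv U s := by
  have := hU.1.continuous_deriv_one
  fun_prop

lemma hasDerivAt_exp_mul_deriv (hU : IsPTW f uc v U) {y : ℝ} (hy : y ≠ 0) :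
    HasDerivAt (fun s => exp (v * s) * deriv U s) (-(exp (v * y) * cutoff f uc (U y))) y := by
  have hexp : HasDerivAt (fun s => exp (v * s)) (exp (v * y) * v) y := by
    simpa using ((hasDerivAt_id y).const_mul v).exp
  exact (hexp.mul (hU.hasDerivAt_deriv hy)).congr_deriv (by ring)

lemma cutoff_eq_zero_of_pos (hU : IsPTW f uc v U) {y : ℝ} (hy : 0 < y) :
    cutoff f uc (U y) = 0 := by
  simp [cutoff, (hU.mem_Icc_of_pos hy).2]

lemma deriv_eq_of_nonneg (hU : IsPTW f uc v U) {y : ℝ} (hy : 0 ≤ y) :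
    deriv U y = deriv U 0 * exp (-(v * y)) := by
  have hconst := eq_of_hasDerivAt_zero hy hU.continuous_exp_mul_deriv.continuousOn
    fun x hx => by simpa [hU.cutoff_eq_zero_of_pos hx.1] using
      hU.hasDerivAt_exp_mul_deriv hx.1.ne'
  simp only [mul_zero, exp_zero, one_mul] at hconst
  rw [← hconst, exp_neg]
  field_simp

lemma deriv_zero_eq (hU : IsPTW f uc v U) (hv : 0 < v) : deriv U 0 = -(v * uc) := by
  set d := deriv U 0
  have hψ' : ∀ x, 0 < x → HasDerivAt (fun s => U s + d / v * exp (-(v * s))) 0 x := by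
    intro x hx
    have hexp : HasDerivAt (fun s => exp (-(v * s))) (exp (-(v * x)) * -v) x := by
      simpa using ((hasDerivAt_id x).const_mul v).neg.exp
    refine ((hU.differentiable x).hasDerivAt.add (hexp.const_mul (d / v))).congr_deriv ?_
    rw [hU.deriv_eq_of_nonneg hx.le]
    field_simp
    ring
  have hU_eq : ∀ y, 0 ≤ y → U y = uc + d / v - d / v * exp (-(v * y)) := by
    intro y hy
    have hconst := eq_of_hasDerivAt_zero hy
      (by have := hU.differentiable.continuous; fun_prop) fun x hx => hψ' x hx.1
    simp only [mul_zero, neg_zero, exp_zero, mul_one, hU.map_zero] at hconst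
    linarith
  have hexp : Tendsto (fun y => exp (-(v * y))) atTop (𝓝 0) :=
    tendsto_exp_atBot.comp (tendsto_neg_atTop_atBot.comp (tendsto_id.const_mul_atTop hv))
  have hlim : Tendsto U atTop (𝓝 (uc + d / v - d / v * 0)) :=
    (tendsto_const_nhds.sub (hexp.const_mul _)).congr'
      (eventually_ge_atTop 0 |>.mono fun y hy => (hU_eq y hy).symm)
  have h := tendsto_nhds_unique hlim hU.tendsto_atTop
  field_simp at h
  linarith

lemma exp_mul_deriv_le_of_neg (hU : IsPTW f uc v U) (hv : 0 < v) {M : ℝ} (hM₀ : 0 ≤ M)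
    (hM : ∀ w ∈ Ioc uc 1, f w ≤ M) {y : ℝ} (hy : y < 0) :
    exp (v * y) * deriv U y ≤ M / v - v * uc := by
  have hφ' : ∀ x, x < 0 → HasDerivAt (fun s => exp (v * s) * deriv U s + M / v * exp (v * s))
      (exp (v * x) * (M - cutoff f uc (U x))) x := by
    intro x hx
    have hexp : HasDerivAt (fun s => exp (v * s)) (exp (v * x) * v) x := by
      simpa using ((hasDerivAt_id x).const_mul v).exp
    refine ((hU.hasDerivAt_exp_mul_deriv hx.ne).add (hexp.const_mul (M / v))).congr_deriv ?_
    field_simp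
    ring
  have hmono := le_of_hasDerivAt_nonneg hy.le
    (by have := hU.continuous_exp_mul_deriv; fun_prop) (fun x hx => hφ' x hx.2)
    fun x hx => mul_nonneg (exp_pos _).le
      (sub_nonneg.2 (cutoff_le hM₀ hM (hU.le_one_of_neg hx.2)))
  simp only [mul_zero, exp_zero, one_mul, mul_one, hU.deriv_zero_eq hv] at hmono
  have : 0 ≤ M / v * exp (v * y) := by positivity
  linarith

theorem sq_mul_le (hU : IsPTW f uc v U) (hv : 0 < v) {M : ℝ} (hM₀ : 0 ≤ M)
    (hM : ∀ w ∈ Ioc uc 1, f w ≤ M) : v ^ 2 * uc ≤ M := by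
  by_contra! hlt
  set c := v * uc - M / v
  have hc : 0 < c := by
    rw [sub_pos, div_lt_iff₀ hv]
    linarith
  have hderiv : ∀ x, x < 0 → deriv U x ≤ -c := by
    intro x hx
    have hg := hU.exp_mul_deriv_le_of_neg hv hM₀ hM hx
    have hexp_le : exp (v * x) ≤ 1 := exp_le_one_iff.2 (by nlinarith)
    nlinarith [exp_pos (v * x)]
  have hy₀ : -2 / c < 0 := div_neg_of_neg_of_pos (by norm_num) hc
  have hgrowth := le_of_hasDerivAt_nonneg (φ := fun s => -U s - c * s) hy₀.le
    (by have := hU.differentiable.continuous; fun_prop)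
    (fun x _ => (hU.differentiable x).hasDerivAt.neg.sub ((hasDerivAt_id x).const_mul c))
    fun x hx => by linarith [hderiv x hx.2]
  simp only [mul_div_cancel₀ _ hc.ne', mul_zero, sub_zero, hU.map_zero] at hgrowth
  obtain ⟨hU₁_nonneg, hU₁_le⟩ := hU.mem_Icc_of_pos one_pos
  linarith [hU.le_one_of_neg hy₀]

end IsPTW

theorem ptw_speed_upper_bound_general (f : ℝ → ℝ) (hf : IsKPP f) (uc : ℝ)
    (huc : uc ∈ Set.Ioo (0:ℝ) 1) (v : ℝ) (U : ℝ → ℝ) (hU : IsPTW f uc v U) :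
    v ≤ Real.sqrt ((1 / uc) * sSup (f '' Set.Ioc uc 1)) := by
  rcases le_or_gt v 0 with hv | hv
  · exact hv.trans (sqrt_nonneg _)
  have hbdd : BddAbove (f '' Ioc uc 1) :=
    ⟨1, by rintro _ ⟨u, hu, rfl⟩; exact (hf.le_self (huc.1.trans hu.1) hu.2).trans hu.2⟩
  have hM₀ : 0 ≤ sSup (f '' Ioc uc 1) :=
    hf.2.2.1 ▸ le_csSup hbdd ⟨1, ⟨huc.2, le_rfl⟩, rfl⟩
  refine le_sqrt_of_sq_le ?_
  rw [one_div_mul_eq_div, le_div_iff₀ huc.1]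
  exact hU.sq_mul_le hv hM₀ fun u hu => le_csSup hbdd ⟨u, hu, rfl⟩

/-- Upper bound for the propagation speed: `v ≤ v_c u_c`. -/
theorem ptw_speed_upper_bound (f : ℝ → ℝ) (hf : IsKPP f) (uc : ℝ)
    (huc : uc ∈ Set.Ioo (0:ℝ) 1) (v : ℝ) (hv : 0 ≤ v) (U : ℝ → ℝ) (hU : IsPTW f uc v U) :
    v ≤ Real.sqrt ((1 / uc) * sSup (f '' Set.Ioc uc 1)) :=
  ptw_speed_upper_bound_general f hf uc huc v U hU
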